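/- Let μ, ν be fixed partitions. If m, n → ∞ with n/m = α > 0 fixed, then h((n^m)) / h((μ + (n^m)) ∪ ν') → (1/(h(μ) h(ν))) · (α+1)^{−|μ|} · (α^{−1}+1)^{−|ν|}, where (μ + (n^m)) ∪ ν' is the partition obtained by adding μ to the m × n rectangle and appending the conjugate of ν below. -/

import Mathlib

/-!
The hook of the cell `(i, j)` of a partition `λ` is `λ i - j + λ' j - i - 1`, where `λ'` is the
conjugate. For `λ = (μ + (n^m)) ∪ ν'` with `m ≥ ℓ(μ)` and `n ≥ ν₁` one has `λ' j = m + ν j` for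
`j < n` and `λ' (n + s) = μ' s`. So the cells to the right of the rectangle carry the hooks of `μ`,
the cells below it those of `ν'` (whose hook product is that of `ν`), and the rectangle cell
`(i, j)` carries `c + μ i + ν j`, where `c = m + n - i - j - 1` is its hook in `(n^m)`. Hence
`h((n^m)) / h(λ) = (h(μ) h(ν))⁻¹ ∏ c / (c + μ i + ν j)`.

Splitting `c / (c + a + b) = c / (c + a) · c / (c + b) · (c + a)(c + b) / (c (c + a + b))`, the
first factors telescope along each row to `∏_{s < μ i} (m - i + s) / (m + n - i + s)`, which tends
to `(α + 1)^{-μ i}`; the second ones telescope along each column to the analogous product tending to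
`(α⁻¹ + 1)^{-ν j}`; the third ones equal `1` outside the fixed block `i < ℓ(μ)`, `j < ℓ(ν)`, and
tend to `1` on it.
-/

open Finset Filter Topology

/-- The product of the hook lengths of a partition with at most `n` parts,
given by the (weakly decreasing) row-length function `l`. -/
def hookProd (n : ℕ) (l : ℕ → ℕ) : ℕ :=
  ∏ i ∈ Finset.range n, ∏ j ∈ Finset.range (l i),
    (l i - j + ((Finset.Ico (i + 1) n).filter (fun i' => j < l i')).card)

/-- The conjugate (transpose) of a partition of length at most `L`:
`l' j = #{i < L | l i > j}`. -/
def conjPart (L : ℕ) (l : ℕ → ℕ) (j : ℕ) : ℕ :=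
  ((Finset.range L).filter (fun i => j < l i)).card

theorem conjPart_le (L : ℕ) (l : ℕ → ℕ) (j : ℕ) : conjPart L l j ≤ L :=
  (card_filter_le _ _).trans (card_range L).le

theorem conjPart_antitone (L : ℕ) (l : ℕ → ℕ) : Antitone (conjPart L l) :=
  fun _ _ hab => card_le_card <| monotone_filter_right _ fun _ _ ht => hab.trans_lt ht

section Conjugate

variable {L : ℕ} {l : ℕ → ℕ}

theorem conjPart_eq_zero (hl : Antitone l) {j : ℕ} (hj : l 0 ≤ j) : conjPart L l j = 0 :=
  card_eq_zero.2 <| filter_eq_empty_iff.2 fun i _ => not_lt.2 <| (hl i.zero_le).trans hj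

theorem conjPart_eq_of_forall_lt_iff (hL : ∀ i, L ≤ i → l i = 0) {j c : ℕ}
    (h : ∀ i, i < c ↔ j < l i) : conjPart L l j = c := by
  suffices (range L).filter (fun i => j < l i) = range c by rw [conjPart, this, card_range]
  ext i
  simp only [mem_filter, mem_range, h]
  refine ⟨And.right, fun hi => ⟨not_le.1 fun hLi => ?_, hi⟩⟩
  rw [hL i hLi] at hi
  exact Nat.not_lt_zero j hi

theorem lt_conjPart_iff (hl : Antitone l) (hL : ∀ i, L ≤ i → l i = 0) (i j : ℕ) :
    i < conjPart L l j ↔ j < l i := by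
  have hex : ∃ k, l k ≤ j := ⟨L, by rw [hL L le_rfl]; exact j.zero_le⟩
  have key : ∀ i, i < Nat.find hex ↔ j < l i := fun i => by
    rw [Nat.lt_find_iff]
    exact ⟨fun h => not_le.1 (h i le_rfl), fun h k hk => not_le.2 (h.trans_le (hl hk))⟩
  rw [conjPart_eq_of_forall_lt_iff hL key, key]

theorem conjPart_conjPart (hl : Antitone l) (hL : ∀ i, L ≤ i → l i = 0) (j : ℕ) :
    conjPart (l 0) (conjPart L l) j = l j :=
  conjPart_eq_of_forall_lt_iff (fun _ => conjPart_eq_zero hl)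
    fun k => (lt_conjPart_iff hl hL j k).symm

theorem card_filter_Ico_lt (hl : Antitone l) (hL : ∀ i, L ≤ i → l i = 0) (i j : ℕ) :
    ((Ico (i + 1) L).filter (fun t => j < l t)).card = conjPart L l j - (i + 1) := by
  suffices (Ico (i + 1) L).filter (fun t => j < l t) = Ico (i + 1) (conjPart L l j) by
    rw [this, Nat.card_Ico]
  ext t
  simp only [mem_filter, mem_Ico, ← lt_conjPart_iff hl hL]
  have := conjPart_le L l j
  omega

-- The leg of the cell `(i, j)` is `l' j - (i + 1)`, read off the conjugate `l'`.
theorem hookProd_eq_prod_conjPart (hl : Antitone l) (hL : ∀ i, L ≤ i → l i = 0) :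
    hookProd L l = ∏ i ∈ range L, ∏ j ∈ range (l i), (l i - j + (conjPart L l j - (i + 1))) :=
  prod_congr rfl fun i _ => prod_congr rfl fun j _ => by rw [card_filter_Ico_lt hl hL]

theorem hookProd_conjPart (hl : Antitone l) (hL : ∀ i, L ≤ i → l i = 0) :
    hookProd (l 0) (conjPart L l) = hookProd L l := by
  rw [hookProd_eq_prod_conjPart (conjPart_antitone L l) fun _ => conjPart_eq_zero hl,
    hookProd_eq_prod_conjPart hl hL]
  refine (prod_comm' fun j i => ?_).trans (prod_congr rfl fun i _ => prod_congr rfl fun j hj => ?_)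
  · simp only [mem_range, lt_conjPart_iff hl hL]
    have := hl i.zero_le
    by_cases hi : L ≤ i
    · simp [hL i hi]
    · omega
  · rw [mem_range] at hj
    have := (lt_conjPart_iff hl hL i j).2 hj
    rw [conjPart_conjPart hl hL]
    omega

end Conjugate

/-- The paper's `(μ + (n^m)) ∪ ρ`. -/
def rectGlue (m n : ℕ) (μ ρ : ℕ → ℕ) (i : ℕ) : ℕ :=
  if i < m then n + μ i else ρ (i - m)

section RectGlue

variable {Lμ Lν K m n : ℕ} {μ ν ρ : ℕ → ℕ}

theorem rectGlue_of_lt {i : ℕ} (hi : i < m) : rectGlue m n μ ρ i = n + μ i :=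
  if_pos hi

theorem rectGlue_add (k : ℕ) : rectGlue m n μ ρ (m + k) = ρ k := by
  simp [rectGlue]

theorem rectGlue_antitone (hμ : Antitone μ) (hρ : Antitone ρ) (hρn : ∀ k, ρ k ≤ n) :
    Antitone (rectGlue m n μ ρ) := by
  intro i i' hii'
  rcases lt_or_ge i' m with hi' | hi'
  · rw [rectGlue_of_lt hi', rectGlue_of_lt (hii'.trans_lt hi')]
    exact Nat.add_le_add_left (hμ hii') n
  obtain ⟨k', rfl⟩ := Nat.exists_eq_add_of_le hi'
  rw [rectGlue_add]
  rcases lt_or_ge i m with hi | hi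
  · rw [rectGlue_of_lt hi]
    exact (hρn k').trans (Nat.le_add_right n _)
  · obtain ⟨k, rfl⟩ := Nat.exists_eq_add_of_le hi
    rw [rectGlue_add]
    exact hρ (by omega)

theorem rectGlue_eq_zero (hρ : ∀ k, K ≤ k → ρ k = 0) {i : ℕ} (hi : m + K ≤ i) :
    rectGlue m n μ ρ i = 0 := by
  obtain ⟨k, rfl⟩ := Nat.exists_eq_add_of_le (le_of_add_le_left hi)
  rw [rectGlue_add]
  exact hρ k (by omega)

theorem conjPart_rectGlue_of_lt (hν : Antitone ν) (hνlen : ∀ i, Lν ≤ i → ν i = 0)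
    {j : ℕ} (hj : j < n) :
    conjPart (m + ν 0) (rectGlue m n μ (conjPart Lν ν)) j = m + ν j := by
  refine conjPart_eq_of_forall_lt_iff (fun _ => rectGlue_eq_zero fun _ => conjPart_eq_zero hν)
    fun i => ?_
  rcases lt_or_ge i m with hi | hi
  · rw [rectGlue_of_lt hi]
    omega
  · obtain ⟨k, rfl⟩ := Nat.exists_eq_add_of_le hi
    rw [rectGlue_add, lt_conjPart_iff hν hνlen]
    omega

theorem conjPart_rectGlue_add (hμ : Antitone μ) (hμlen : ∀ i, Lμ ≤ i → μ i = 0)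
    (hm : Lμ ≤ m) (hρ : ∀ k, K ≤ k → ρ k = 0) (hρn : ∀ k, ρ k ≤ n) (s : ℕ) :
    conjPart (m + K) (rectGlue m n μ ρ) (n + s) = conjPart Lμ μ s := by
  refine conjPart_eq_of_forall_lt_iff (fun _ => rectGlue_eq_zero hρ) fun i => ?_
  rw [lt_conjPart_iff hμ hμlen]
  rcases lt_or_ge i m with hi | hi
  · rw [rectGlue_of_lt hi]
    omega
  · obtain ⟨k, rfl⟩ := Nat.exists_eq_add_of_le hi
    rw [rectGlue_add]
    have := hρn k
    have := hμlen (m + k) (by omega)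
    omega

theorem hookProd_rectGlue (hμ : Antitone μ) (hμlen : ∀ i, Lμ ≤ i → μ i = 0)
    (hν : Antitone ν) (hνlen : ∀ i, Lν ≤ i → ν i = 0) (hm : Lμ ≤ m) (hn : Lν ≤ n) :
    hookProd (m + ν 0) (rectGlue m n μ (conjPart Lν ν)) = hookProd Lμ μ * hookProd Lν ν *
      ∏ i ∈ range m, ∏ j ∈ range n, (m + n - (i + j + 1) + μ i + ν j) := by
  have hν'0 : ∀ k, ν 0 ≤ k → conjPart Lν ν k = 0 := fun _ => conjPart_eq_zero hν
  have hν'n : ∀ k, conjPart Lν ν k ≤ n := fun k => (conjPart_le Lν ν k).trans hn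
  set lam := rectGlue m n μ (conjPart Lν ν)
  have lam_top : ∀ i < m, lam i = n + μ i := fun _ => rectGlue_of_lt
  have lam_bottom : ∀ k, lam (m + k) = conjPart Lν ν k := rectGlue_add
  rw [hookProd_eq_prod_conjPart (rectGlue_antitone hμ (conjPart_antitone Lν ν) hν'n)
    (fun _ => rectGlue_eq_zero hν'0), prod_range_add]
  have hμm : hookProd Lμ μ =
      ∏ i ∈ range m, ∏ j ∈ range (μ i), (μ i - j + (conjPart Lμ μ j - (i + 1))) := by
    rw [hookProd_eq_prod_conjPart hμ hμlen]
    exact prod_subset (range_subset_range.2 hm)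
      fun i _ hi => by rw [hμlen i (by simpa using hi), range_zero, prod_empty]
  have top : ∏ i ∈ range m, ∏ j ∈ range (lam i), (lam i - j + (conjPart (m + ν 0) lam j - (i + 1)))
      = (∏ i ∈ range m, ∏ j ∈ range n, (m + n - (i + j + 1) + μ i + ν j)) * hookProd Lμ μ := by
    rw [hμm, ← prod_mul_distrib]
    refine prod_congr rfl fun i hi => ?_
    rw [mem_range] at hi
    rw [lam_top i hi, prod_range_add]
    congr 1
    · refine prod_congr rfl fun j hj => ?_
      rw [mem_range] at hj
      rw [conjPart_rectGlue_of_lt hν hνlen hj]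
      omega
    · refine prod_congr rfl fun s _ => ?_
      rw [conjPart_rectGlue_add hμ hμlen hm hν'0 hν'n]
      omega
  have bottom : ∏ k ∈ range (ν 0), ∏ j ∈ range (lam (m + k)),
      (lam (m + k) - j + (conjPart (m + ν 0) lam j - (m + k + 1))) = hookProd Lν ν := by
    rw [← hookProd_conjPart hν hνlen,
      hookProd_eq_prod_conjPart (conjPart_antitone Lν ν) hν'0]
    refine prod_congr rfl fun k _ => ?_
    rw [lam_bottom]
    refine prod_congr rfl fun j hj => ?_
    rw [mem_range] at hj
    rw [conjPart_rectGlue_of_lt hν hνlen (hj.trans_le (hν'n k)), conjPart_conjPart hν hνlen]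
    omega
  rw [top, bottom]
  ring

theorem hookProd_rect (m n : ℕ) :
    hookProd m (fun i => if i < m then n else 0) =
      ∏ i ∈ range m, ∏ j ∈ range n, (m + n - (i + j + 1)) := by
  simpa [conjPart, rectGlue, hookProd] using
    hookProd_rectGlue (μ := fun _ => 0) (ν := fun _ => 0) (Lμ := 0) (Lν := 0) (m := m) (n := n)
      antitone_const (fun _ _ => rfl) antitone_const (fun _ _ => rfl) m.zero_le n.zero_le

end RectGlue

theorem prod_range_div_add_comm {x : ℝ} (hx : 0 < x) (n k : ℕ) :
    ∏ j ∈ range n, (x + j) / (x + k + j) = ∏ s ∈ range k, (x + s) / (x + n + s) := by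
  rw [prod_div_distrib, prod_div_distrib,
    div_eq_div_iff (prod_ne_zero_iff.2 fun _ _ => by positivity)
      (prod_ne_zero_iff.2 fun _ _ => by positivity)]
  have h := prod_range_add (fun j => x + j) n k
  rw [add_comm n k, prod_range_add] at h
  simp only [Nat.cast_add, ← add_assoc] at h
  linear_combination -h

def rectHook (m n i j : ℕ) : ℝ := m + n - (i + j + 1)

section RectHook

variable {m n i j : ℕ}

theorem rectHook_pos (hi : i < m) (hj : j < n) : 0 < rectHook m n i j := by
  have : (i : ℝ) + 1 ≤ m := by exact_mod_cast hi
  have : (j : ℝ) + 1 ≤ n := by exact_mod_cast hj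
  unfold rectHook
  linarith

theorem natCast_sub_eq_rectHook (hi : i < m) (hj : j < n) :
    ((m + n - (i + j + 1) : ℕ) : ℝ) = rectHook m n i j := by
  rw [Nat.cast_sub (by omega), rectHook]
  push_cast
  ring

theorem rectHook_comm (m n i j : ℕ) : rectHook n m j i = rectHook m n i j := by
  unfold rectHook
  ring

theorem prod_rectHook_div_add (hi : i < m) (k : ℕ) :
    ∏ j ∈ range n, rectHook m n i j / (rectHook m n i j + k) =
      ∏ s ∈ range k, ((m : ℝ) - i + s) / (m + n - i + s) := by
  have hx : (0 : ℝ) < m - i := sub_pos.2 (by exact_mod_cast hi)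
  calc _ = ∏ j ∈ range n, ((m - i : ℝ) + j) / ((m - i : ℝ) + k + j) := by
        rw [← prod_range_reflect]
        refine prod_congr rfl fun j hj => ?_
        rw [mem_range] at hj
        rw [rectHook, Nat.cast_sub (by omega), Nat.cast_sub (by omega)]
        push_cast
        ring_nf
    _ = _ := by
        rw [prod_range_div_add_comm hx]
        exact prod_congr rfl fun s _ => by ring_nf

end RectHook

noncomputable def rowFactor (m n L : ℕ) (μ : ℕ → ℕ) : ℝ :=
  ∏ i ∈ range L, ∏ s ∈ range (μ i), ((m : ℝ) - i + s) / (m + n - i + s)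

noncomputable def crossFactor (m n Lμ Lν : ℕ) (μ ν : ℕ → ℕ) : ℝ :=
  ∏ i ∈ range Lμ, ∏ j ∈ range Lν, (rectHook m n i j + μ i) * (rectHook m n i j + ν j) /
    (rectHook m n i j * (rectHook m n i j + μ i + ν j))

section Factorization

variable {Lμ Lν m n : ℕ} {μ ν : ℕ → ℕ}

theorem prod_prod_rectHook_div_add_eq_rowFactor (hm : Lμ ≤ m) (hμlen : ∀ i, Lμ ≤ i → μ i = 0) :
    ∏ i ∈ range m, ∏ j ∈ range n, rectHook m n i j / (rectHook m n i j + μ i) =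
      rowFactor m n Lμ μ := by
  rw [← prod_subset (range_subset_range.2 hm) fun i hi hiL => prod_eq_one fun j hj => by
    rw [hμlen i (by simpa using hiL), Nat.cast_zero, add_zero,
      div_self (rectHook_pos (mem_range.1 hi) (mem_range.1 hj)).ne']]
  exact prod_congr rfl fun i hi => prod_rectHook_div_add (lt_of_lt_of_le (mem_range.1 hi) hm) _

theorem prod_prod_rectHook_cross_eq_crossFactor (hm : Lμ ≤ m) (hμlen : ∀ i, Lμ ≤ i → μ i = 0)
    (hn : Lν ≤ n) (hνlen : ∀ j, Lν ≤ j → ν j = 0) :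
    ∏ i ∈ range m, ∏ j ∈ range n, (rectHook m n i j + μ i) * (rectHook m n i j + ν j) /
      (rectHook m n i j * (rectHook m n i j + μ i + ν j)) = crossFactor m n Lμ Lν μ ν := by
  rw [← prod_subset (range_subset_range.2 hm) fun i hi hiL => prod_eq_one fun j hj => by
    have := rectHook_pos (mem_range.1 hi) (mem_range.1 hj)
    simp only [hμlen i (by simpa using hiL), Nat.cast_zero, add_zero]
    exact div_self (by positivity)]
  refine prod_congr rfl fun i hi => ?_
  rw [← prod_subset (range_subset_range.2 hn) fun j hj hjL => by
    have := rectHook_pos (lt_of_lt_of_le (mem_range.1 hi) hm) (mem_range.1 hj)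
    simp only [hνlen j (by simpa using hjL), Nat.cast_zero, add_zero]
    rw [mul_comm]
    exact div_self (by positivity)]

theorem div_add_add_eq_mul {x a b : ℝ} (hx : 0 < x) (ha : 0 ≤ a) (hb : 0 ≤ b) :
    x / (x + a + b) = x / (x + a) * (x / (x + b)) * ((x + a) * (x + b) / (x * (x + a + b))) := by
  field_simp

theorem prod_prod_rectHook_div_add_add (hm : Lμ ≤ m) (hμlen : ∀ i, Lμ ≤ i → μ i = 0)
    (hn : Lν ≤ n) (hνlen : ∀ j, Lν ≤ j → ν j = 0) :
    ∏ i ∈ range m, ∏ j ∈ range n, rectHook m n i j / (rectHook m n i j + μ i + ν j) =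
      rowFactor m n Lμ μ * rowFactor n m Lν ν * crossFactor m n Lμ Lν μ ν := by
  rw [← prod_prod_rectHook_div_add_eq_rowFactor hm hμlen,
    ← prod_prod_rectHook_div_add_eq_rowFactor hn hνlen, ← prod_prod_rectHook_cross_eq_crossFactor hm hμlen hn hνlen, prod_comm (s := range n)]
  simp only [rectHook_comm, ← prod_mul_distrib]
  exact prod_congr rfl fun i hi => prod_congr rfl fun j hj =>
    div_add_add_eq_mul (rectHook_pos (mem_range.1 hi) (mem_range.1 hj)) (by positivity)
      (by positivity)

end Factorization

theorem hookProd_rect_div_hookProd_rectGlue {Lμ Lν m n : ℕ} {μ ν : ℕ → ℕ}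
    (hμ : Antitone μ) (hμlen : ∀ i, Lμ ≤ i → μ i = 0)
    (hν : Antitone ν) (hνlen : ∀ i, Lν ≤ i → ν i = 0) (hm : Lμ ≤ m) (hn : Lν ≤ n) :
    (hookProd m (fun i => if i < m then n else 0) : ℝ) /
        hookProd (m + ν 0) (rectGlue m n μ (conjPart Lν ν)) =
      1 / (hookProd Lμ μ * hookProd Lν ν) *
        rowFactor m n Lμ μ * rowFactor n m Lν ν * crossFactor m n Lμ Lν μ ν := by
  rw [mul_assoc _ (rowFactor m n Lμ μ), mul_assoc,
    ← prod_prod_rectHook_div_add_add hm hμlen hn hνlen, hookProd_rect,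
    hookProd_rectGlue hμ hμlen hν hνlen hm hn, Nat.cast_mul, div_mul_eq_div_div_swap,
    div_eq_mul_one_div, mul_comm]
  simp only [Nat.cast_mul, Nat.cast_prod, Nat.cast_add, ← prod_div_distrib]
  refine congrArg _ (prod_congr rfl fun i hi => prod_congr rfl fun j hj => ?_)
  rw [natCast_sub_eq_rectHook (mem_range.1 hi) (mem_range.1 hj)]

section Limits

variable {ι : Type*} {l : Filter ι}

theorem tendsto_add_div_add_add {x y : ι → ℝ} {β : ℝ} (hx : Tendsto x l atTop)
    (hy : Tendsto (fun t => y t / x t) l (𝓝 β)) (hβ : β + 1 ≠ 0) (a b : ℝ) :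
    Tendsto (fun t => (x t + a) / (y t + x t + b)) l (𝓝 (β + 1)⁻¹) := by
  have hinv : Tendsto (fun t => (x t)⁻¹) l (𝓝 0) := hx.inv_tendsto_atTop
  have hnum : Tendsto (fun t => 1 + a * (x t)⁻¹) l (𝓝 1) := by
    simpa using (hinv.const_mul a).const_add 1
  have hden : Tendsto (fun t => y t / x t + 1 + b * (x t)⁻¹) l (𝓝 (β + 1)) := by
    simpa using (hy.add_const 1).add (hinv.const_mul b)
  refine (inv_eq_one_div (β + 1) ▸ hnum.div hden hβ).congr' ?_
  filter_upwards [hx.eventually_gt_atTop 0] with t ht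
  simp only [Pi.div_apply]
  field_simp

theorem tendsto_add_div_add {x : ι → ℝ} (hx : Tendsto x l atTop) (a b : ℝ) :
    Tendsto (fun t => (x t + a) / (x t + b)) l (𝓝 1) := by
  simpa using
    tendsto_add_div_add_add hx (y := 0) (β := 0) (by simp [tendsto_const_nhds]) (by simp) a b

theorem tendsto_rowFactor [l.NeBot] {m n : ι → ℕ} {α : ℝ} (hm : Tendsto m l atTop)
    (hnm : Tendsto (fun t => (n t : ℝ) / m t) l (𝓝 α)) (L : ℕ) (μ : ℕ → ℕ) :
    Tendsto (fun t => rowFactor (m t) (n t) L μ) l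
      (𝓝 ((α + 1) ^ (-(∑ i ∈ range L, μ i : ℤ)))) := by
  have hα : 0 ≤ α := ge_of_tendsto' hnm fun t => by positivity
  have hM : Tendsto (fun t => (m t : ℝ)) l atTop := tendsto_natCast_atTop_atTop.comp hm
  have h : Tendsto (fun t => rowFactor (m t) (n t) L μ) l
      (𝓝 (∏ i ∈ range L, ∏ _s ∈ range (μ i), (α + 1)⁻¹)) :=
    tendsto_finsetProd _ fun i _ => tendsto_finsetProd _ fun s _ =>
      (tendsto_add_div_add_add hM hnm (by positivity) (s - i) (s - i)).congr fun t => by ring_nf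
  rw [← Nat.cast_sum, zpow_neg, zpow_natCast, ← inv_pow]
  simpa only [prod_const, card_range, prod_pow_eq_pow_sum] using h

theorem tendsto_crossFactor {m n : ι → ℕ} (hm : Tendsto m l atTop) (Lμ Lν : ℕ) (μ ν : ℕ → ℕ) :
    Tendsto (fun t => crossFactor (m t) (n t) Lμ Lν μ ν) l (𝓝 1) := by
  have h : Tendsto (fun t => crossFactor (m t) (n t) Lμ Lν μ ν) l
      (𝓝 (∏ i ∈ range Lμ, ∏ j ∈ range Lν, (1 * 1 : ℝ))) := by
    refine tendsto_finsetProd _ fun i _ => tendsto_finsetProd _ fun j _ => ?_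
    have hX : Tendsto (fun t => rectHook (m t) (n t) i j) l atTop := by
      refine tendsto_atTop_mono (fun t => ?_)
        (tendsto_atTop_add_const_right _ (-(i + j + 1 : ℝ)) (tendsto_natCast_atTop_atTop.comp hm))
      simp only [rectHook, Function.comp_apply]
      linarith [(n t).cast_nonneg (α := ℝ)]
    refine ((tendsto_add_div_add hX (μ i) 0).mul (tendsto_add_div_add hX (ν j) (μ i + ν j))).congr
      fun t => ?_
    rw [add_zero, ← add_assoc, mul_div_mul_comm]
  simpa using h

end Limits

/-- for fixed partitions `μ, ν`, if `m, n → ∞` with `n/m → α > 0`,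
then `h((n^m)) / h((μ + (n^m)) ∪ ν') → (1/(h(μ)h(ν))) (α+1)^{-|μ|} (α⁻¹+1)^{-|ν|}`,
where `(μ + (n^m)) ∪ ν'` is the `m × n` rectangle with `μ` added to its rows and
the conjugate of `ν` appended below. -/
theorem stmt10 (Lμ Lν : ℕ) (μ ν : ℕ → ℕ)
    (hμ : Antitone μ) (hμlen : ∀ i, Lμ ≤ i → μ i = 0)
    (hν : Antitone ν) (hνlen : ∀ i, Lν ≤ i → ν i = 0)
    (α : ℝ) (hα : 0 < α) (m n : ℕ → ℕ)
    (hm : Tendsto m atTop atTop)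
    (hratio : Tendsto (fun j => (n j : ℝ) / (m j : ℝ)) atTop (𝓝 α)) :
    Tendsto (fun j =>
        (hookProd (m j) (fun i => if i < m j then n j else 0) : ℝ) /
          (hookProd (m j + ν 0) (fun i =>
            if i < m j then n j + μ i else conjPart Lν ν (i - m j)) : ℝ))
      atTop
      (𝓝 ((1 / ((hookProd Lμ μ : ℝ) * (hookProd Lν ν : ℝ))) *
        (α + 1) ^ (-(∑ i ∈ Finset.range Lμ, μ i : ℤ)) *
        (α⁻¹ + 1) ^ (-(∑ i ∈ Finset.range Lν, ν i : ℤ)))) := by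
  have hM : Tendsto (fun t => (m t : ℝ)) atTop atTop := tendsto_natCast_atTop_atTop.comp hm
  have hn : Tendsto n atTop atTop := by
    refine tendsto_natCast_atTop_iff.1 ((hratio.pos_mul_atTop hα hM).congr' ?_)
    filter_upwards [hM.eventually_gt_atTop 0] with t ht
    exact div_mul_cancel₀ _ ht.ne'
  have hmn : Tendsto (fun t => (m t : ℝ) / n t) atTop (𝓝 α⁻¹) := by
    simpa only [inv_div] using hratio.inv₀ hα.ne'
  have hlim := ((tendsto_const_nhds (x := 1 / ((hookProd Lμ μ : ℝ) * hookProd Lν ν))).mul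
    (tendsto_rowFactor hm hratio Lμ μ)).mul (tendsto_rowFactor hn hmn Lν ν) |>.mul
    (tendsto_crossFactor (n := n) hm Lμ Lν μ ν)
  rw [mul_one] at hlim
  refine hlim.congr' ?_
  filter_upwards [hm.eventually_ge_atTop Lμ, hn.eventually_ge_atTop Lν] with t hmt hnt
  exact (hookProd_rect_div_hookProd_rectGlue hμ hμlen hν hνlen hmt hnt).symm
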